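/- arXiv:2507.18306 — 2 statements merged into one kernel-verified Lean document; each statement's English description precedes it below -/
import Mathlib

section
/- For any finite simple graph G of order n ≥ 3 and any integer k with 3 ≤ k ≤ n, the k-coalition number satisfies C_k(G) ≤ n − k + 2. -/
open SimpleGraph

/-- A set `S` is a `k`-dominating set of `G` if every vertex outside `S`
has at least `k` neighbors in `S`. -/
def KDominatingSet {V : Type*} (G : SimpleGraph V) (k : ℕ) (S : Set V) : Prop :=
  ∀ v ∉ S, k ≤ (S ∩ G.neighborSet v).ncard

/-- Two disjoint sets `A` and `B` form a `k`-coalition in `G` if neither is a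
`k`-dominating set of `G` but their union is. -/
def KCoalition {V : Type*} (G : SimpleGraph V) (k : ℕ) (A B : Set V) : Prop :=
  Disjoint A B ∧ ¬ KDominatingSet G k A ∧ ¬ KDominatingSet G k B ∧
    KDominatingSet G k (A ∪ B)

/-- A `k`-coalition partition of `G` is a partition of the vertex set in which every
part is either a `k`-dominating set of cardinality `k` or forms a `k`-coalition with
another part. -/
def KCoalitionPartition {V : Type*} (G : SimpleGraph V) (k : ℕ) (P : Finset (Set V)) : Prop :=
  (∀ A ∈ P, A.Nonempty) ∧
  (P : Set (Set V)).PairwiseDisjoint id ∧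
  (⋃ A ∈ P, A) = (Set.univ : Set V) ∧
  ∀ A ∈ P, (KDominatingSet G k A ∧ A.ncard = k) ∨
    ∃ B ∈ P, B ≠ A ∧ KCoalition G k A B

/-- The `k`-coalition number of `G`: the maximum cardinality of a
`k`-coalition partition of `G`. -/
noncomputable def kCoalitionNumber {V : Type*} (G : SimpleGraph V) (k : ℕ) : ℕ :=
  sSup {n | ∃ P : Finset (Set V), KCoalitionPartition G k P ∧ P.card = n}

lemma ncard_biUnion_eq {V : Type*} [Fintype V] (P : Finset (Set V))
    (hd : (P : Set (Set V)).PairwiseDisjoint id) :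
    (⋃ A ∈ P, A).ncard = ∑ A ∈ P, A.ncard := by
  classical
  induction P using Finset.induction_on with
  | empty => simp
  | @insert A s hA ih =>
    have hd' : (s : Set (Set V)).PairwiseDisjoint id := by
      apply hd.subset; intro x hx; simp [hx]
    have hdis : Disjoint A (⋃ B ∈ s, B) := by
      rw [Set.disjoint_iUnion₂_right]
      intro B hB
      exact hd (by simp) (by simp [hB]) (by rintro rfl; exact hA hB)
    rw [Finset.set_biUnion_insert, Finset.sum_insert hA,
      Set.ncard_union_eq hdis (Set.toFinite _) (Set.toFinite _), ih hd']

theorem kCoalitionNumber_le {V : Type*} [Fintype V] (G : SimpleGraph V) (k : ℕ)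
    (hn : 3 ≤ Fintype.card V) (hk3 : 3 ≤ k) (hkn : k ≤ Fintype.card V) :
    kCoalitionNumber G k ≤ Fintype.card V - k + 2 := by
  classical
  set n := Fintype.card V with hndef
  apply csSup_le'
  rintro m ⟨P, ⟨hne, hdisj, hcover, hpart⟩, rfl⟩
  -- partition sums to n
  have hsum : ∑ A ∈ P, A.ncard = n := by
    rw [← ncard_biUnion_eq P hdisj, hcover, Set.ncard_univ, Nat.card_eq_fintype_card]
  have hone : ∀ A ∈ P, 1 ≤ A.ncard := by
    intro A hA
    exact (Set.ncard_pos (Set.toFinite A)).mpr (hne A hA)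
  have hPne : P.Nonempty := by
    by_contra h
    rw [Finset.not_nonempty_iff_eq_empty] at h
    subst h
    simp at hcover
    have : Nonempty V := Fintype.card_pos_iff.mp (by omega)
    obtain ⟨v⟩ := this
    exact (hcover ▸ Set.notMem_empty v) (Set.mem_univ v)
  obtain ⟨A, hA⟩ := hPne
  -- key claim: P.card + k ≤ n + 2
  have key : P.card + k ≤ n + 2 := by
    rcases hpart A hA with ⟨_, hAk⟩ | ⟨B, hB, hBA, hdAB, _, _, hdom⟩
    · -- A is k-dominating of cardinality k
      have h1 : ∑ C ∈ P.erase A, C.ncard ≥ (P.erase A).card := by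
        calc (P.erase A).card = (P.erase A).card • 1 := by simp
        _ ≤ ∑ C ∈ P.erase A, C.ncard :=
          Finset.card_nsmul_le_sum _ _ _ (fun C hC => hone C (Finset.mem_of_mem_erase hC))
      have h2 : ∑ C ∈ P, C.ncard = A.ncard + ∑ C ∈ P.erase A, C.ncard :=
        (Finset.add_sum_erase P _ hA).symm
      have hcard : (P.erase A).card = P.card - 1 := Finset.card_erase_of_mem hA
      have hPpos : 1 ≤ P.card := Finset.card_pos.mpr ⟨A, hA⟩
      omega
    · -- A, B form a coalition
      by_cases huniv : A ∪ B = Set.univ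
      · -- then P = {A, B}
        have hsub : P ⊆ {A, B} := by
          intro C hC
          obtain ⟨x, hx⟩ := hne C hC
          have hxAB : x ∈ A ∪ B := huniv ▸ Set.mem_univ x
          simp only [Finset.mem_insert, Finset.mem_singleton]
          by_contra hcon
          push_neg at hcon
          rcases hxAB with hxA | hxB
          · exact (hdisj hC hA hcon.1).ne_of_mem hx hxA rfl
          · exact (hdisj hC hB hcon.2).ne_of_mem hx hxB rfl
        have : P.card ≤ 2 := le_trans (Finset.card_le_card hsub)
          (le_trans (Finset.card_insert_le _ _) (by simp))
        omega
      · -- pick v outside A ∪ B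
        have : ¬ (Set.univ : Set V) ⊆ A ∪ B := fun h =>
          huniv (Set.eq_univ_of_univ_subset h ▸ rfl)
        obtain ⟨v, _, hv⟩ := Set.not_subset.mp this
        have hk' : k ≤ (A ∪ B).ncard := le_trans (hdom v hv)
          (Set.ncard_le_ncard Set.inter_subset_left (Set.toFinite _))
        have hAB : (A ∪ B).ncard = A.ncard + B.ncard :=
          Set.ncard_union_eq (hdisj hA hB (fun h => hBA h.symm))
            (Set.toFinite _) (Set.toFinite _)
        have hBe : B ∈ P.erase A := Finset.mem_erase.mpr ⟨hBA, hB⟩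
        have h2 : ∑ C ∈ P, C.ncard = A.ncard + ∑ C ∈ P.erase A, C.ncard :=
          (Finset.add_sum_erase P _ hA).symm
        have h3 : ∑ C ∈ P.erase A, C.ncard
            = B.ncard + ∑ C ∈ (P.erase A).erase B, C.ncard :=
          (Finset.add_sum_erase _ _ hBe).symm
        have h4 : ((P.erase A).erase B).card ≤ ∑ C ∈ (P.erase A).erase B, C.ncard := by
          calc ((P.erase A).erase B).card = ((P.erase A).erase B).card • 1 := by simp
          _ ≤ _ := Finset.card_nsmul_le_sum _ _ _
            (fun C hC => hone C (Finset.mem_of_mem_erase (Finset.mem_of_mem_erase hC)))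
        have hc1 : (P.erase A).card = P.card - 1 := Finset.card_erase_of_mem hA
        have hc2 : ((P.erase A).erase B).card = (P.erase A).card - 1 :=
          Finset.card_erase_of_mem hBe
        have hPpos : 1 ≤ P.card := Finset.card_pos.mpr ⟨A, hA⟩
        have hP2 : 2 ≤ P.card := Finset.one_lt_card.mpr ⟨A, hA, B, hB, fun h => hBA h.symm⟩
        omega
  omega
end

section
/- Let G be a finite simple graph of order n ≥ 3 and let k be an integer with 3 ≤ k ≤ n. Then C_k(G) = n − k + 2 if and only if n = k, or G is isomorphic to the join H ∨ K_{n−k+1} for some graph H of order k − 1. -/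
open SimpleGraph

/-- The join of two graphs: their disjoint union together with all edges between them. -/
def graphJoin {α β : Type*} (H : SimpleGraph α) (K : SimpleGraph β) : SimpleGraph (α ⊕ β) :=
  (H ⊕g K) ⊔ completeBipartiteGraph α β

/-!
In a `k`-coalition partition `P` of a graph on `n` vertices, `∑_{A ∈ P} (|A| - 1) = n - |P|`.
A part that is a `k`-dominating set of size `k` contributes `k - 1` to this sum, and a coalition
pair `A, B` whose union misses a vertex has `|A ∪ B| ≥ k`, so contributes at least `k - 2`;
hence `|P| ≤ n - k + 2`. In the extremal case with `n > k` every coalition pair has exactly `k`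
vertices and all other parts are singletons. Since `k ≥ 3`, two singletons never form a coalition,
so every singleton has the same partner `X`, with `|X| = k - 1`, and `X ∪ {w}` is a
`k`-dominating set of size `k` for each `w ∉ X`. Such a set lies in the neighbourhood of every
vertex outside it, so each vertex outside `X` is adjacent to all others: `G ≅ G[X] ∨ K_{n-k+1}`.
Conversely, for such a join, or for `n = k` with `X` all vertices but one, `X` together with
the singletons outside `X` is a `k`-coalition partition with `n - k + 2` parts.
-/
section KDominatingSet

variable {V : Type*} {G : SimpleGraph V} {k : ℕ} {S A B : Set V}

lemma kDominatingSet_univ (G : SimpleGraph V) (k : ℕ) : KDominatingSet G k Set.univ :=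
  fun v hv => absurd (Set.mem_univ v) hv

lemma KDominatingSet.le_ncard [Finite V] (hS : KDominatingSet G k S) {v : V} (hv : v ∉ S) :
    k ≤ S.ncard :=
  (hS v hv).trans (Set.ncard_le_ncard Set.inter_subset_left)

lemma KDominatingSet.subset_neighborSet [Finite V] (hS : KDominatingSet G k S)
    (hcard : S.ncard ≤ k) {v : V} (hv : v ∉ S) : S ⊆ G.neighborSet v :=
  Set.inter_eq_left.mp <|
    Set.eq_of_subset_of_ncard_le Set.inter_subset_left (hcard.trans (hS v hv))

lemma KCoalition.symm (h : KCoalition G k A B) : KCoalition G k B A :=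
  ⟨h.1.symm, h.2.2.1, h.2.1, Set.union_comm A B ▸ h.2.2.2⟩

lemma KCoalition.le_ncard_add_ncard [Finite V] (h : KCoalition G k A B) {v : V}
    (hv : v ∉ A ∪ B) : k ≤ A.ncard + B.ncard :=
  (h.2.2.2.le_ncard hv).trans (Set.ncard_union_le A B)

end KDominatingSet

lemma Finset.exists_mem_ne_ne {α : Type*} {s : Finset α} (hs : 2 < s.card) (a b : α) :
    ∃ c ∈ s, c ≠ a ∧ c ≠ b := by
  classical
  obtain ⟨c, hc, hcb⟩ := (s.erase a).exists_mem_ne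
    (by have := s.pred_card_le_card_erase (a := a); omega) b
  exact ⟨c, Finset.mem_of_mem_erase hc, Finset.ne_of_mem_erase hc, hcb⟩

section Partition

variable {V : Type*} [Fintype V] {P : Finset (Set V)} {A B : Set V}

lemma sum_ncard_eq_card_of_partition (hdisj : (P : Set (Set V)).PairwiseDisjoint id)
    (hcov : ⋃ A ∈ P, A = Set.univ) : ∑ A ∈ P, A.ncard = Fintype.card V := by
  have := P.finite_toSet.ncard_biUnion (fun A _ => A.toFinite) hdisj
  rw [finsum_mem_coe_finset] at this
  simpa [hcov] using this.symm

lemma card_add_ncard_add_ncard_add_sum_ncard_sub_one (hne : ∀ A ∈ P, A.Nonempty)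
    (hdisj : (P : Set (Set V)).PairwiseDisjoint id) (hcov : ⋃ A ∈ P, A = Set.univ)
    (hA : A ∈ P) (hB : B ∈ P) (hAB : A ≠ B) :
    P.card + A.ncard + B.ncard + ∑ C ∈ P \ {A, B}, (C.ncard - 1) = Fintype.card V + 2 := by
  classical
  have hsub : {A, B} ⊆ P :=
    Finset.insert_subset_iff.mpr ⟨hA, Finset.singleton_subset_iff.mpr hB⟩
  have hsum := Finset.sum_sdiff (f := Set.ncard) hsub
  rw [Finset.sum_pair hAB, sum_ncard_eq_card_of_partition hdisj hcov] at hsum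
  have hrest : ∑ C ∈ P \ {A, B}, (C.ncard - 1) + (P \ {A, B}).card =
      ∑ C ∈ P \ {A, B}, C.ncard := by
    rw [Finset.card_eq_sum_ones, ← Finset.sum_add_distrib]
    refine Finset.sum_congr rfl fun C hC => Nat.sub_add_cancel ?_
    exact (Set.ncard_pos).mpr (hne C (Finset.sdiff_subset hC))
  have hcard := Finset.card_sdiff_of_subset hsub
  rw [Finset.card_pair hAB] at hcard
  have := Finset.card_le_card hsub
  rw [Finset.card_pair hAB] at this
  omega

lemma card_add_ncard_add_ncard_le (hne : ∀ A ∈ P, A.Nonempty)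
    (hdisj : (P : Set (Set V)).PairwiseDisjoint id) (hcov : ⋃ A ∈ P, A = Set.univ)
    (hA : A ∈ P) (hB : B ∈ P) (hAB : A ≠ B) :
    P.card + A.ncard + B.ncard ≤ Fintype.card V + 2 := by
  have := card_add_ncard_add_ncard_add_sum_ncard_sub_one hne hdisj hcov hA hB hAB
  omega

lemma ncard_eq_one_of_card_add_ncard_add_ncard_eq (hne : ∀ A ∈ P, A.Nonempty)
    (hdisj : (P : Set (Set V)).PairwiseDisjoint id) (hcov : ⋃ A ∈ P, A = Set.univ)
    (hA : A ∈ P) (hB : B ∈ P) (hAB : A ≠ B)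
    (h : P.card + A.ncard + B.ncard = Fintype.card V + 2) {C : Set V} (hC : C ∈ P)
    (hCA : C ≠ A) (hCB : C ≠ B) : C.ncard = 1 := by
  classical
  have hzero := card_add_ncard_add_ncard_add_sum_ncard_sub_one hne hdisj hcov hA hB hAB
  rw [h, add_eq_left, Finset.sum_eq_zero_iff] at hzero
  have := hzero C (by simp [hC, hCA, hCB])
  have := (Set.ncard_pos).mpr (hne C hC)
  omega

end Partition

namespace KCoalitionPartition

variable {V : Type*} [Fintype V] {G : SimpleGraph V} {k : ℕ} {P : Finset (Set V)} {A B : Set V}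

lemma le_ncard_add_ncard (hP : KCoalitionPartition G k P) (hA : A ∈ P) (hB : B ∈ P)
    (hAB : KCoalition G k A B) (hP3 : 2 < P.card) : k ≤ A.ncard + B.ncard := by
  obtain ⟨C, hC, hCA, hCB⟩ := Finset.exists_mem_ne_ne hP3 A B
  obtain ⟨c, hc⟩ := hP.1 C hC
  refine hAB.le_ncard_add_ncard (v := c) ?_
  rintro (hcA | hcB)
  · exact Set.disjoint_left.mp (hP.2.1 hC hA hCA) hc hcA
  · exact Set.disjoint_left.mp (hP.2.1 hC hB hCB) hc hcB

lemma card_le (hP : KCoalitionPartition G k P) : P.card ≤ Fintype.card V - k + 2 := by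
  by_contra! hP3
  obtain ⟨A, hA⟩ : P.Nonempty := Finset.card_pos.mp (by omega)
  rcases hP.2.2.2 A hA with ⟨-, hAk⟩ | ⟨B, hB, hBA, hAB⟩
  · obtain ⟨B, hB, hBA⟩ := P.exists_mem_ne (by omega) A
    have := card_add_ncard_add_ncard_le hP.1 hP.2.1 hP.2.2.1 hA hB hBA.symm
    have := (Set.ncard_pos).mpr (hP.1 B hB)
    omega
  · have := card_add_ncard_add_ncard_le hP.1 hP.2.1 hP.2.2.1 hA hB hBA.symm
    have := hP.le_ncard_add_ncard hA hB hAB (by omega)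
    omega

lemma exists_kCoalition_of_card_eq (hP : KCoalitionPartition G k P)
    (hcard : P.card = Fintype.card V - k + 2) (hkn : k ≤ Fintype.card V) (hA : A ∈ P) :
    ∃ B ∈ P, B ≠ A ∧ KCoalition G k A B := by
  refine (hP.2.2.2 A hA).resolve_left fun ⟨_, hAk⟩ => ?_
  obtain ⟨B, hB, hBA⟩ := P.exists_mem_ne (by omega) A
  have := card_add_ncard_add_ncard_le hP.1 hP.2.1 hP.2.2.1 hA hB hBA.symm
  have := (Set.ncard_pos).mpr (hP.1 B hB)
  omega

lemma ncard_add_ncard_eq_of_card_eq (hP : KCoalitionPartition G k P)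
    (hcard : P.card = Fintype.card V - k + 2) (hkn : k < Fintype.card V) (hA : A ∈ P)
    (hB : B ∈ P) (hBA : B ≠ A) (hAB : KCoalition G k A B) : A.ncard + B.ncard = k := by
  have := card_add_ncard_add_ncard_le hP.1 hP.2.1 hP.2.2.1 hA hB hBA.symm
  have := hP.le_ncard_add_ncard hA hB hAB (by omega)
  omega

lemma ncard_eq_one_of_card_eq (hP : KCoalitionPartition G k P)
    (hcard : P.card = Fintype.card V - k + 2) (hkn : k < Fintype.card V) (hA : A ∈ P)
    (hB : B ∈ P) (hBA : B ≠ A) (hAB : KCoalition G k A B) {C : Set V} (hC : C ∈ P)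
    (hCA : C ≠ A) (hCB : C ≠ B) : C.ncard = 1 := by
  have := hP.ncard_add_ncard_eq_of_card_eq hcard hkn hA hB hBA hAB
  exact ncard_eq_one_of_card_add_ncard_add_ncard_eq hP.1 hP.2.1 hP.2.2.1 hA hB hBA.symm
    (by omega) hC hCA hCB

lemma exists_kDominatingSet_insert (hP : KCoalitionPartition G k P)
    (hcard : P.card = Fintype.card V - k + 2) (hk : 3 ≤ k) (hkn : k < Fintype.card V) :
    ∃ U : Set V, U.ncard = k - 1 ∧ ∀ w ∉ U, KDominatingSet G k (insert w U) := by
  have hpartner A (hA : A ∈ P) := hP.exists_kCoalition_of_card_eq hcard hkn.le hA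
  obtain ⟨A, hA⟩ : P.Nonempty := Finset.card_pos.mp (by omega)
  obtain ⟨B, hB, hBA, hAB⟩ := hpartner A hA
  obtain ⟨C, hC, hCA, hCB⟩ := Finset.exists_mem_ne_ne (s := P) (by omega) A B
  have hC1 := hP.ncard_eq_one_of_card_eq hcard hkn hA hB hBA hAB hC hCA hCB
  obtain ⟨X, hX, hXC, hCX⟩ := hpartner C hC
  have hCX_card := hP.ncard_add_ncard_eq_of_card_eq hcard hkn hC hX hXC hCX
  have hsingleton : ∀ D ∈ P, D ≠ X → D.ncard = 1 := fun D hD hDX => by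
    by_cases hDC : D = C
    · exact hDC ▸ hC1
    · exact hP.ncard_eq_one_of_card_eq hcard hkn hC hX hXC hCX hD hDC hDX
  refine ⟨X, by omega, fun w hw => ?_⟩
  obtain ⟨D, hD, hwD⟩ : ∃ D ∈ P, w ∈ D := by
    simpa using (Set.eq_univ_iff_forall.mp hP.2.2.1) w
  have hDX : D ≠ X := by rintro rfl; exact hw hwD
  obtain ⟨Y, hY, hYD, hDY⟩ := hpartner D hD
  have hYX : Y = X := by
    by_contra hYX
    have := hsingleton D hD hDX
    have := hsingleton Y hY hYX
    have := hP.ncard_add_ncard_eq_of_card_eq hcard hkn hD hY hYD hDY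
    omega
  obtain ⟨v, rfl⟩ := Set.ncard_eq_one.mp (hsingleton D hD hDX)
  rw [Set.mem_singleton_iff.mp hwD, Set.insert_eq, ← hYX]
  exact hDY.2.2.2

end KCoalitionPartition

section InsertSingletonsCompl

variable {V : Type*} [Fintype V]

noncomputable def insertSingletonsCompl (U : Set V) : Finset (Set V) := by
  classical exact insert U (Uᶜ.toFinset.image fun w => {w})

variable {U A : Set V}

lemma mem_insertSingletonsCompl :
    A ∈ insertSingletonsCompl U ↔ A = U ∨ ∃ w ∉ U, A = {w} := by
  classical
  simp only [insertSingletonsCompl, Finset.mem_insert, Finset.mem_image, Set.mem_toFinset,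
    Set.mem_compl_iff, eq_comm (a := A)]

lemma card_insertSingletonsCompl (U : Set V) :
    (insertSingletonsCompl U).card = (Uᶜ).ncard + 1 := by
  classical
  have hU : U ∉ Uᶜ.toFinset.image fun w => ({w} : Set V) := by
    simp only [Finset.mem_image, Set.mem_toFinset, not_exists, not_and]
    exact fun w hw hwU => hw (hwU ▸ rfl)
  rw [insertSingletonsCompl, Finset.card_insert_of_notMem hU,
    Finset.card_image_of_injective _ Set.singleton_injective, ← Set.ncard_eq_toFinset_card']

lemma pairwiseDisjoint_insertSingletonsCompl (U : Set V) :
    (insertSingletonsCompl U : Set (Set V)).PairwiseDisjoint id := by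
  rintro A hA B hB hAB
  rcases mem_insertSingletonsCompl.mp hA with rfl | ⟨v, hv, rfl⟩ <;>
    rcases mem_insertSingletonsCompl.mp hB with rfl | ⟨w, hw, rfl⟩
  · exact absurd rfl hAB
  · exact Set.disjoint_singleton_right.mpr hw
  · exact Set.disjoint_singleton_left.mpr hv
  · exact Set.disjoint_singleton.mpr fun hvw => hAB (hvw ▸ rfl)

lemma iUnion_insertSingletonsCompl (U : Set V) :
    ⋃ A ∈ insertSingletonsCompl U, A = Set.univ := by
  refine Set.eq_univ_of_forall fun v => ?_
  by_cases hv : v ∈ U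
  · exact Set.mem_biUnion (mem_insertSingletonsCompl.mpr (.inl rfl)) hv
  · exact Set.mem_biUnion (mem_insertSingletonsCompl.mpr (.inr ⟨v, hv, rfl⟩)) rfl

end InsertSingletonsCompl

section Universal

variable {V : Type*} [Fintype V] {G : SimpleGraph V} {k : ℕ} {U : Set V}

lemma adj_of_kDominatingSet_insert (hU : U.ncard = k - 1)
    (hdom : ∀ w ∉ U, KDominatingSet G k (insert w U)) (hk : 0 < k) (hkn : k < Fintype.card V) :
    ∀ v ∉ U, ∀ u ≠ v, G.Adj v u := by
  intro v hv u huv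
  have hUc : 1 < (Uᶜ).ncard := by
    rw [Set.ncard_compl, Nat.card_eq_fintype_card]
    omega
  obtain ⟨w, hw, hwv, hu⟩ : ∃ w ∉ U, w ≠ v ∧ u ∈ insert w U := by
    by_cases huU : u ∈ U
    · obtain ⟨w, hw, hwv⟩ := Set.exists_ne_of_one_lt_ncard hUc v
      exact ⟨w, hw, hwv, Set.mem_insert_of_mem w huU⟩
    · exact ⟨u, huU, huv, Set.mem_insert u U⟩
  have hcard : (insert w U).ncard ≤ k := by
    rw [Set.ncard_insert_of_notMem hw]
    omega
  exact (hdom w hw).subset_neighborSet hcard (by simp [hv, hwv.symm]) hu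

lemma kDominatingSet_insert_of_adj (hU : U.ncard = k - 1)
    (hadj : ∀ v ∉ U, ∀ u ≠ v, G.Adj v u) {w : V} (hw : w ∉ U) :
    KDominatingSet G k (insert w U) := by
  intro v hv
  have hsub : insert w U ⊆ G.neighborSet v := fun u hu =>
    hadj v (fun hvU => hv (Set.mem_insert_of_mem w hvU)) u (by rintro rfl; exact hv hu)
  rw [Set.inter_eq_left.mpr hsub, Set.ncard_insert_of_notMem hw]
  omega

lemma kCoalition_singleton_of_kDominatingSet_insert (hU : U.ncard < k) (hk : 1 < k)
    (hV : 1 < Fintype.card V) {w : V} (hw : w ∉ U) (hdom : KDominatingSet G k (insert w U)) :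
    KCoalition G k U {w} := by
  obtain ⟨u, hu⟩ := Fintype.exists_ne_of_one_lt_card hV w
  refine ⟨Set.disjoint_singleton_right.mpr hw, fun h => ?_, fun h => ?_, ?_⟩
  · have := h.le_ncard hw
    omega
  · have := h.le_ncard (v := u) hu
    rw [Set.ncard_singleton] at this
    omega
  · rwa [Set.union_singleton]

lemma kCoalitionPartition_insertSingletonsCompl (hU : U.ncard = k - 1)
    (hdom : ∀ w ∉ U, KDominatingSet G k (insert w U)) (hk : 2 ≤ k)
    (hkn : k ≤ Fintype.card V) :
    KCoalitionPartition G k (insertSingletonsCompl U) := by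
  have hUc : (Uᶜ).ncard = Fintype.card V - k + 1 := by
    rw [Set.ncard_compl, Nat.card_eq_fintype_card]
    omega
  have hcoal w (hw : w ∉ U) : KCoalition G k U {w} :=
    kCoalition_singleton_of_kDominatingSet_insert (by omega) hk (by omega) hw (hdom w hw)
  have hsingleton_ne w (hw : w ∉ U) : {w} ≠ U := fun h => hw (h ▸ rfl)
  obtain ⟨w₀, hw₀⟩ : (Uᶜ).Nonempty := (Set.ncard_pos).mp (by omega)
  refine ⟨fun A hA => ?_, pairwiseDisjoint_insertSingletonsCompl U,
    iUnion_insertSingletonsCompl U, fun A hA => .inr ?_⟩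
  · rcases mem_insertSingletonsCompl.mp hA with rfl | ⟨w, -, rfl⟩
    · exact (Set.ncard_pos).mp (by omega)
    · exact Set.singleton_nonempty w
  · rcases mem_insertSingletonsCompl.mp hA with rfl | ⟨w, hw, rfl⟩
    · exact ⟨{w₀}, mem_insertSingletonsCompl.mpr (.inr ⟨w₀, hw₀, rfl⟩),
        hsingleton_ne w₀ hw₀, hcoal w₀ hw₀⟩
    · exact ⟨U, mem_insertSingletonsCompl.mpr (.inl rfl), (hsingleton_ne w hw).symm,
        (hcoal w hw).symm⟩

lemma exists_kCoalitionPartition_of_kDominatingSet_insert (hU : U.ncard = k - 1)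
    (hdom : ∀ w ∉ U, KDominatingSet G k (insert w U)) (hk : 2 ≤ k)
    (hkn : k ≤ Fintype.card V) :
    ∃ P : Finset (Set V), KCoalitionPartition G k P ∧ P.card = Fintype.card V - k + 2 := by
  refine ⟨_, kCoalitionPartition_insertSingletonsCompl hU hdom hk hkn, ?_⟩
  rw [card_insertSingletonsCompl, Set.ncard_compl, Nat.card_eq_fintype_card]
  omega

end Universal

lemma graphJoin_top_adj_inr {α β : Type*} (H : SimpleGraph α) (j : β) (x : α ⊕ β) :
    (graphJoin H (⊤ : SimpleGraph β)).Adj (.inr j) x ↔ .inr j ≠ x := by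
  cases x <;> simp [graphJoin]

lemma SimpleGraph.adj_iff_ne_of_forall_adj {V : Type*} {G : SimpleGraph V} {v : V}
    (hv : ∀ u ≠ v, G.Adj v u) (u : V) : G.Adj v u ↔ v ≠ u :=
  ⟨G.ne_of_adj, fun h => hv u h.symm⟩

lemma exists_forall_adj_of_iso_graphJoin_top {V : Type*} {G : SimpleGraph V} {p m : ℕ}
    {H : SimpleGraph (Fin p)} (φ : G ≃g graphJoin H (⊤ : SimpleGraph (Fin m))) :
    ∃ U : Set V, U.ncard = p ∧ ∀ v ∉ U, ∀ u ≠ v, G.Adj v u := by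
  refine ⟨Set.range (φ.symm ∘ Sum.inl), ?_, fun v hv u huv => ?_⟩
  · rw [Set.ncard_range_of_injective (φ.symm.injective.comp Sum.inl_injective),
      Nat.card_eq_fintype_card, Fintype.card_fin]
  · obtain ⟨j, hj⟩ : ∃ j, φ v = .inr j := by
      rcases h : φ v with i | j
      · exact absurd ⟨i, by simp [← h]⟩ hv
      · exact ⟨j, rfl⟩
    rw [← φ.map_adj_iff, hj, graphJoin_top_adj_inr, ← hj]
    exact φ.injective.ne huv.symm

lemma exists_iso_graphJoin_top_of_forall_adj {V : Type*} [Fintype V] {G : SimpleGraph V}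
    {p m : ℕ} (hpm : p + m = Fintype.card V) {U : Set V} (hU : U.ncard = p)
    (hadj : ∀ v ∉ U, ∀ u ≠ v, G.Adj v u) :
    ∃ H : SimpleGraph (Fin p), Nonempty (G ≃g graphJoin H (⊤ : SimpleGraph (Fin m))) := by
  classical
  have hUc : Nat.card ↥Uᶜ = m := by
    rw [Nat.card_coe_set_eq, Set.ncard_compl, hU, Nat.card_eq_fintype_card]
    omega
  let eU : Fin p ≃ U := (Finite.equivFinOfCardEq ((Nat.card_coe_set_eq U).trans hU)).symm
  let eC : Fin m ≃ ↥Uᶜ := (Finite.equivFinOfCardEq hUc).symm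
  let e : Fin p ⊕ Fin m ≃ V := (Equiv.sumCongr eU eC).trans (Equiv.Set.sumCompl U)
  have he_inr j : e (.inr j) ∉ U := (eC j).prop
  refine ⟨G.comap (e ∘ Sum.inl), ⟨Iso.symm ⟨e, fun {x y} => ?_⟩⟩⟩
  rcases x with i | j
  · rcases y with i' | j'
    · simp [graphJoin]
    · rw [G.adj_comm, (graphJoin _ _).adj_comm, graphJoin_top_adj_inr,
        adj_iff_ne_of_forall_adj (hadj _ (he_inr j')), e.injective.ne_iff]
  · rw [graphJoin_top_adj_inr, adj_iff_ne_of_forall_adj (hadj _ (he_inr j)),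
      e.injective.ne_iff]

lemma kCoalitionNumber_eq_iff_exists_kCoalitionPartition {V : Type*} {G : SimpleGraph V}
    {k m : ℕ} (hm : m ≠ 0) (hle : ∀ P, KCoalitionPartition G k P → P.card ≤ m) :
    kCoalitionNumber G k = m ↔ ∃ P, KCoalitionPartition G k P ∧ P.card = m := by
  have hub : m ∈ upperBounds {n | ∃ P, KCoalitionPartition G k P ∧ P.card = n} :=
    fun _ ⟨P, hP, hcard⟩ => hcard ▸ hle P hP
  refine ⟨fun h => ?_, fun hex => IsGreatest.csSup_eq ⟨hex, hub⟩⟩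
  have hne : {n | ∃ P, KCoalitionPartition G k P ∧ P.card = n}.Nonempty := by
    by_contra hempty
    rw [Set.not_nonempty_iff_eq_empty] at hempty
    rw [kCoalitionNumber, hempty, csSup_empty] at h
    exact hm h.symm
  exact h ▸ Nat.sSup_mem hne ⟨m, hub⟩

theorem kCoalitionNumber_eq_iff_general {V : Type*} [Fintype V] (G : SimpleGraph V) (k : ℕ)
    (hk3 : 3 ≤ k) (hkn : k ≤ Fintype.card V) :
    kCoalitionNumber G k = Fintype.card V - k + 2 ↔
      Fintype.card V = k ∨
        ∃ H : SimpleGraph (Fin (k - 1)),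
          Nonempty (G ≃g graphJoin H (⊤ : SimpleGraph (Fin (Fintype.card V - k + 1)))) := by
  rw [kCoalitionNumber_eq_iff_exists_kCoalitionPartition (by omega) fun P hP => hP.card_le]
  constructor
  · rintro ⟨P, hP, hcard⟩
    refine hkn.eq_or_lt.imp Eq.symm fun hkn' => ?_
    obtain ⟨U, hU, hdom⟩ := hP.exists_kDominatingSet_insert hcard hk3 hkn'
    exact exists_iso_graphJoin_top_of_forall_adj (by omega) hU
      (adj_of_kDominatingSet_insert hU hdom (by omega) hkn')
  · rintro (hnk | ⟨H, ⟨φ⟩⟩)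
    · obtain ⟨v⟩ : Nonempty V := Fintype.card_pos_iff.mp (by omega)
      have hv : ({v}ᶜ : Set V).ncard = k - 1 := by
        rw [Set.ncard_compl, Set.ncard_singleton, Nat.card_eq_fintype_card, hnk]
      refine exists_kCoalitionPartition_of_kDominatingSet_insert hv (fun w hw => ?_) (by omega) hkn
      rw [Set.mem_singleton_iff.mp (Set.notMem_compl_iff.mp hw), Set.insert_eq,
        Set.union_compl_self]
      exact kDominatingSet_univ G k
    · obtain ⟨U, hU, hadj⟩ := exists_forall_adj_of_iso_graphJoin_top φ
      exact exists_kCoalitionPartition_of_kDominatingSet_insert hU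
        (fun w hw => kDominatingSet_insert_of_adj hU hadj hw) (by omega) hkn

theorem kCoalitionNumber_eq_iff {V : Type*} [Fintype V] (G : SimpleGraph V) (k : ℕ)
    (hn : 3 ≤ Fintype.card V) (hk3 : 3 ≤ k) (hkn : k ≤ Fintype.card V) :
    kCoalitionNumber G k = Fintype.card V - k + 2 ↔
      Fintype.card V = k ∨
        ∃ H : SimpleGraph (Fin (k - 1)),
          Nonempty (G ≃g graphJoin H (⊤ : SimpleGraph (Fin (Fintype.card V - k + 1)))) :=
  kCoalitionNumber_eq_iff_general G k hk3 hkn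
end
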